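/- For every f ∈ L²[0,1], the Volterra operator satisfies ‖Vf‖₂ ≤ (2/π)‖f‖₂, i.e., ∫₀¹ |∫₀ˣ f(t) dt|² dx ≤ (4/π²) ∫₀¹ |f(t)|² dt. -/

import Mathlib

/-! A weighted Cauchy–Schwarz inequality (Schur's test) with the weight `w t = cos (π t / 2)`, the
extremal function. For `x ∈ [0, 1]`,
`|∫₀ˣ f|² ≤ (∫₀ˣ w) (∫₀ˣ |f|² / w)` and `∫₀ˣ w = (2/π) sin (π x / 2) =: W x`.
Integrating in `x` and exchanging the order of integration (Tonelli) turns the right-hand side into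
`∫₀¹ (∫ₜ¹ W) |f t|² / w t dt`, and `∫ₜ¹ W = (2/π)² w t`, which leaves `(2/π)² ∫₀¹ |f|²`. -/

open MeasureTheory Real

noncomputable def m : Measure ℝ := volume.restrict (Set.Icc 0 1)

open Set
open scoped ENNReal

theorem lintegral_sq_le_lintegral_mul_lintegral_sq_div {α : Type*} [MeasurableSpace α]
    (μ : Measure α) {g w : α → ℝ≥0∞} (hg : AEMeasurable g μ) (hw : AEMeasurable w μ)
    (hw0 : ∀ᵐ a ∂μ, w a ≠ 0) (hw_top : ∀ᵐ a ∂μ, w a ≠ ∞) :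
    (∫⁻ a, g a ∂μ) ^ 2 ≤ (∫⁻ a, w a ∂μ) * ∫⁻ a, g a ^ 2 / w a ∂μ := by
  have sqrt_sq (x : ℝ≥0∞) : (x ^ 2) ^ (2⁻¹ : ℝ) = x := by
    simpa using ENNReal.pow_rpow_inv_natCast two_ne_zero x
  have sq_sqrt (x : ℝ≥0∞) : (x ^ (2⁻¹ : ℝ)) ^ 2 = x := by
    simpa using ENNReal.rpow_inv_natCast_pow two_ne_zero x
  have hsplit : g =ᵐ[μ] fun a => w a ^ (2⁻¹ : ℝ) * (g a ^ 2 / w a) ^ (2⁻¹ : ℝ) := by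
    filter_upwards [hw0, hw_top] with a h0 htop
    rw [← ENNReal.mul_rpow_of_nonneg _ _ (by norm_num), ENNReal.mul_div_cancel h0 htop, sqrt_sq]
  have hholder := ENNReal.lintegral_mul_le_Lp_mul_Lq μ Real.HolderConjugate.two_two
    (hw.pow_const (2⁻¹ : ℝ)) (((hg.pow_const 2).div hw).pow_const (2⁻¹ : ℝ))
  calc (∫⁻ a, g a ∂μ) ^ 2
      ≤ ((∫⁻ a, w a ∂μ) ^ (2⁻¹ : ℝ) * (∫⁻ a, g a ^ 2 / w a ∂μ) ^ (2⁻¹ : ℝ)) ^ 2 := by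
        rw [lintegral_congr_ae hsplit]; gcongr
        simpa [sq_sqrt] using hholder
    _ = (∫⁻ a, w a ∂μ) * ∫⁻ a, g a ^ 2 / w a ∂μ := by rw [mul_pow, sq_sqrt, sq_sqrt]

theorem lintegral_mul_setLIntegral_Iic_eq {α : Type*} [MeasurableSpace α] [LinearOrder α]
    [TopologicalSpace α] [OrderClosedTopology α] [SecondCountableTopology α]
    [OpensMeasurableSpace α] (μ : Measure α) [SFinite μ] {W G : α → ℝ≥0∞}
    (hW : Measurable W) (hG : Measurable G) :
    ∫⁻ x, W x * ∫⁻ t in Iic x, G t ∂μ ∂μ = ∫⁻ t, (∫⁻ x in Ici t, W x ∂μ) * G t ∂μ := by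
  set K : α × α → ℝ≥0∞ := {p | p.2 ≤ p.1}.indicator fun p => W p.1 * G p.2
  have hK : Measurable K := ((hW.comp measurable_fst).mul (hG.comp measurable_snd)).indicator
    (measurableSet_le measurable_snd measurable_fst)
  calc ∫⁻ x, W x * ∫⁻ t in Iic x, G t ∂μ ∂μ = ∫⁻ x, ∫⁻ t, K (x, t) ∂μ ∂μ := by
        congr! 2 with x
        rw [← lintegral_const_mul _ hG, ← lintegral_indicator measurableSet_Iic]
        rfl
    _ = ∫⁻ t, ∫⁻ x, K (x, t) ∂μ ∂μ := lintegral_lintegral_swap hK.aemeasurable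
    _ = ∫⁻ t, (∫⁻ x in Ici t, W x ∂μ) * G t ∂μ := by
        congr! 2 with t
        rw [← lintegral_mul_const _ hW, ← lintegral_indicator measurableSet_Ici]
        rfl

theorem lintegral_sq_setLIntegral_Iic_le {α : Type*} [MeasurableSpace α] [LinearOrder α]
    [TopologicalSpace α] [OrderClosedTopology α] [SecondCountableTopology α]
    [OpensMeasurableSpace α] (μ : Measure α) [SFinite μ] {g w W : α → ℝ≥0∞} {C : ℝ≥0∞}
    (hg : Measurable g) (hw : Measurable w) (hW : Measurable W)
    (hw0 : ∀ᵐ t ∂μ, w t ≠ 0) (hw_top : ∀ᵐ t ∂μ, w t ≠ ∞)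
    (hwW : ∀ᵐ x ∂μ, ∫⁻ t in Iic x, w t ∂μ ≤ W x)
    (hWw : ∀ᵐ t ∂μ, ∫⁻ x in Ici t, W x ∂μ ≤ C * w t) :
    ∫⁻ x, (∫⁻ t in Iic x, g t ∂μ) ^ 2 ∂μ ≤ C * ∫⁻ t, g t ^ 2 ∂μ := by
  calc ∫⁻ x, (∫⁻ t in Iic x, g t ∂μ) ^ 2 ∂μ
      ≤ ∫⁻ x, W x * ∫⁻ t in Iic x, g t ^ 2 / w t ∂μ ∂μ := by
        refine lintegral_mono_ae ?_
        filter_upwards [hwW] with x hx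
        refine (lintegral_sq_le_lintegral_mul_lintegral_sq_div _ hg.aemeasurable
          hw.aemeasurable (ae_restrict_of_ae hw0) (ae_restrict_of_ae hw_top)).trans ?_
        gcongr
    _ = ∫⁻ t, (∫⁻ x in Ici t, W x ∂μ) * (g t ^ 2 / w t) ∂μ :=
        lintegral_mul_setLIntegral_Iic_eq μ hW ((hg.pow_const 2).div hw)
    _ ≤ ∫⁻ t, C * g t ^ 2 ∂μ := by
        refine lintegral_mono_ae ?_
        filter_upwards [hWw, hw0, hw_top] with t ht h0 htop
        calc (∫⁻ x in Ici t, W x ∂μ) * (g t ^ 2 / w t)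
            ≤ C * w t * (g t ^ 2 / w t) := by gcongr
          _ = C * g t ^ 2 := by rw [mul_assoc, ENNReal.mul_div_cancel h0 htop]
    _ = C * ∫⁻ t, g t ^ 2 ∂μ := lintegral_const_mul _ (hg.pow_const 2)

theorem eLpNorm_two_le_mul_of_lintegral_sq_le {α E : Type*} [MeasurableSpace α]
    {μ : Measure α} [NormedAddCommGroup E] {f g : α → E} {c : ℝ≥0∞}
    (h : ∫⁻ x, ‖f x‖ₑ ^ 2 ∂μ ≤ c ^ 2 * ∫⁻ x, ‖g x‖ₑ ^ 2 ∂μ) :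
    eLpNorm f 2 μ ≤ c * eLpNorm g 2 μ := by
  have hsq (φ : α → E) : eLpNorm φ 2 μ ^ 2 = ∫⁻ x, ‖φ x‖ₑ ^ 2 ∂μ := by
    simpa using eLpNorm_nnreal_pow_eq_lintegral (f := φ) (μ := μ) (p := 2) two_ne_zero
  rwa [← ENNReal.pow_le_pow_left_iff two_ne_zero, mul_pow, hsq, hsq]

theorem setLIntegral_Icc_ofReal_eq {f : ℝ → ℝ} {a b : ℝ} (hab : a ≤ b) (hf : Continuous f)
    (hf0 : ∀ x ∈ Icc a b, 0 ≤ f x) :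
    ∫⁻ x in Icc a b, ENNReal.ofReal (f x) = ENNReal.ofReal (∫ x in a..b, f x) := by
  rw [intervalIntegral.integral_of_le hab, ← Measure.restrict_congr_set Ioc_ae_eq_Icc,
    ofReal_integral_eq_lintegral_ofReal hf.integrableOn_Ioc]
  filter_upwards [ae_restrict_mem measurableSet_Ioc] with x hx
  exact hf0 x (Ioc_subset_Icc_self hx)

instance : IsFiniteMeasure m := by
  unfold m; infer_instance

theorem ae_mem_Icc_m : ∀ᵐ x ∂m, x ∈ Icc (0 : ℝ) 1 := ae_restrict_mem measurableSet_Icc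

theorem ae_cos_pos_m : ∀ᵐ t ∂m, 0 < cos (π / 2 * t) := by
  have hIco : ∀ᵐ t ∂m, t ∈ Ico (0 : ℝ) 1 := by
    rw [m, ← Measure.restrict_congr_set Ico_ae_eq_Icc]
    exact ae_restrict_mem measurableSet_Ico
  filter_upwards [hIco] with t ⟨h0, h1⟩
  apply cos_pos_of_mem_Ioo
  constructor <;> nlinarith [pi_pos]

theorem setLIntegral_Iic_cos_m {x : ℝ} (hx : x ∈ Icc (0 : ℝ) 1) :
    ∫⁻ t in Iic x, ENNReal.ofReal (cos (π / 2 * t)) ∂m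
      = ENNReal.ofReal (2 / π * sin (π / 2 * x)) := by
  have hset : Iic x ∩ Icc 0 1 = Icc 0 x := by
    ext t; simp only [mem_inter_iff, mem_Iic, mem_Icc]; constructor
    · rintro ⟨h, h0, -⟩; exact ⟨h0, h⟩
    · rintro ⟨h0, h⟩; exact ⟨h, h0, h.trans hx.2⟩
  rw [m, Measure.restrict_restrict measurableSet_Iic, hset,
    setLIntegral_Icc_ofReal_eq hx.1 (by fun_prop)]
  · simp [intervalIntegral.integral_comp_mul_left (fun t => cos t), integral_cos]
  · rintro t ⟨h0, h1⟩
    apply cos_nonneg_of_mem_Icc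
    constructor <;> nlinarith [pi_pos, hx.2]

theorem setLIntegral_Ici_sin_m {t : ℝ} (ht : t ∈ Icc (0 : ℝ) 1) :
    ∫⁻ x in Ici t, ENNReal.ofReal (2 / π * sin (π / 2 * x)) ∂m
      = ENNReal.ofReal ((2 / π) ^ 2 * cos (π / 2 * t)) := by
  have hset : Ici t ∩ Icc 0 1 = Icc t 1 := by
    ext x; simp only [mem_inter_iff, mem_Ici, mem_Icc]; constructor
    · rintro ⟨h, -, h1⟩; exact ⟨h, h1⟩
    · rintro ⟨h, h1⟩; exact ⟨h, ht.1.trans h, h1⟩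
  rw [m, Measure.restrict_restrict measurableSet_Ici, hset,
    setLIntegral_Icc_ofReal_eq ht.2 (by fun_prop)]
  · simp [intervalIntegral.integral_comp_mul_left (fun t => sin t), integral_sin]
    field_simp
  · rintro x ⟨h0, h1⟩
    have : 0 ≤ sin (π / 2 * x) := by
      apply sin_nonneg_of_nonneg_of_le_pi <;> nlinarith [pi_pos, ht.1]
    positivity

theorem lintegral_sq_setLIntegral_Iic_m_le {g : ℝ → ℝ≥0∞} (hg : Measurable g) :
    ∫⁻ x, (∫⁻ t in Iic x, g t ∂m) ^ 2 ∂m ≤ ENNReal.ofReal (2 / π) ^ 2 * ∫⁻ t, g t ^ 2 ∂m := by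
  refine lintegral_sq_setLIntegral_Iic_le m hg (w := fun t => ENNReal.ofReal (cos (π / 2 * t)))
    (W := fun x => ENNReal.ofReal (2 / π * sin (π / 2 * x))) (by fun_prop) (by fun_prop) ?_
    (ae_of_all _ fun _ => ENNReal.ofReal_ne_top) ?_ ?_
  · filter_upwards [ae_cos_pos_m] with t ht using (ENNReal.ofReal_pos.2 ht).ne'
  · filter_upwards [ae_mem_Icc_m] with x hx using (setLIntegral_Iic_cos_m hx).le
  · filter_upwards [ae_mem_Icc_m] with t ht
    rw [setLIntegral_Ici_sin_m ht, ENNReal.ofReal_mul (by positivity),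
      ENNReal.ofReal_pow (by positivity)]

theorem volterra_norm_apply_le (V : Lp ℂ 2 m →L[ℂ] Lp ℂ 2 m)
    (hV : ∀ f : Lp ℂ 2 m, V f =ᵐ[m] fun x => ∫ t in Set.Ioc 0 x, f t ∂m) :
    ∀ f : Lp ℂ 2 m, ‖V f‖ ≤ (2 / π) * ‖f‖ := by
  intro f
  have hf : Measurable fun t => ‖f t‖ₑ := (Lp.stronglyMeasurable f).measurable.enorm
  have hprimitive (x : ℝ) : ‖∫ t in Ioc 0 x, f t ∂m‖ₑ ≤ ∫⁻ t in Iic x, ‖f t‖ₑ ∂m :=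
    (enorm_integral_le_lintegral_enorm _).trans (lintegral_mono_set Ioc_subset_Iic_self)
  have hle : ‖V f‖ₑ ≤ ENNReal.ofReal (2 / π) * ‖f‖ₑ := by
    rw [Lp.enorm_def, Lp.enorm_def, eLpNorm_congr_ae (hV f)]
    refine eLpNorm_two_le_mul_of_lintegral_sq_le ?_
    calc ∫⁻ x, ‖∫ t in Ioc 0 x, f t ∂m‖ₑ ^ 2 ∂m ≤ ∫⁻ x, (∫⁻ t in Iic x, ‖f t‖ₑ ∂m) ^ 2 ∂m := by
          gcongr with x; exact hprimitive x
      _ ≤ ENNReal.ofReal (2 / π) ^ 2 * ∫⁻ t, ‖f t‖ₑ ^ 2 ∂m := lintegral_sq_setLIntegral_Iic_m_le hf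
  rwa [← ofReal_norm, ← ofReal_norm, ← ENNReal.ofReal_mul (by positivity),
    ENNReal.ofReal_le_ofReal_iff (by positivity)] at hle
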